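/- arXiv:0903.2937 — 3 statements merged into one kernel-verified Lean document; each statement's English description precedes it below -/
import Mathlib

section
/- Let k ≥ 1 be an integer, and let F(ω) - θ_0 = G(ω)(ω_1^k + a_1(ω')ω_1^{k-1} + ... + a_k(ω')) near a point ω_0 ∈ ℝ^{d}, with ω' = (ω_2,...,ω_d), where G and a_j are real smooth functions with G(ω_0) ≠ 0. Then there is a neighborhood U of ω_0 such that vol( { ω ∈ U : |F(ω) - θ_0| ≤ t } ) = O(t^{1/k}) as t → 0. -/
open MeasureTheory Set
open Polynomial NNReal ENNReal

lemma measure_abs_poly_le (k : ℕ) (hk : 1 ≤ k) (p : ℝ[X]) (hm : p.Monic)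
    (hdeg : p.natDegree = k) (ε : ℝ) (hε : 0 < ε) :
    volume {x : ℝ | |p.eval x| ≤ ε} ≤ ENNReal.ofReal ((4 * k) * ε ^ ((1:ℝ)/k)) := by
  set q : ℂ[X] := p.map (algebraMap ℝ ℂ) with hqdef
  have hqm : q.Monic := hm.map _
  have hsplit : q.Splits := IsAlgClosed.splits q
  have hcard : q.roots.card = k := by
    rw [splits_iff_card_roots.mp hsplit, hqdef, hm.natDegree_map, hdeg]
  have hfac : q = (q.roots.map fun z => X - C z).prod :=
    hsplit.eq_prod_roots_of_monic hqm
  have heval : ∀ x : ℝ, ‖p.eval x‖₊ = (q.roots.map fun z => ‖(x:ℂ) - z‖₊).prod := by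
    intro x
    have h1 : ((p.eval x : ℝ) : ℂ) = q.eval (x : ℂ) := by
      rw [hqdef, eval_map]
      exact (Polynomial.eval₂_at_apply (algebraMap ℝ ℂ) x).symm
    have h2 : q.eval (x : ℂ) = (q.roots.map fun z => (x:ℂ) - z).prod := by
      conv_lhs => rw [hfac]
      rw [eval_multiset_prod, Multiset.map_map]
      simp
    have h3 : ‖p.eval x‖₊ = ‖q.eval (x:ℂ)‖₊ := by
      rw [← h1, Complex.nnnorm_real]
    have h4 : ∀ (M : Multiset ℂ), ‖M.prod‖₊ = (M.map fun w => ‖w‖₊).prod := fun M => by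
      simpa using map_multiset_prod (nnnormHom (α := ℂ)) M
    rw [h3, h2, h4, Multiset.map_map]
    rfl
  set R : ℝ := (2*ε) ^ ((1:ℝ)/k) with hRdef
  have hR : 0 < R := Real.rpow_pos_of_pos (by linarith) _
  have hRk : R ^ k = 2 * ε := by
    rw [hRdef, ← Real.rpow_natCast ((2*ε) ^ ((1:ℝ)/k)) k, ← Real.rpow_mul (by linarith),
      one_div, inv_mul_cancel₀ (Nat.cast_ne_zero.mpr (by omega) : (k:ℝ) ≠ 0), Real.rpow_one]
  have hsub : {x : ℝ | |p.eval x| ≤ ε} ⊆ ⋃ z ∈ q.roots.toFinset, Metric.closedBall z.re R := by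
    intro x hx
    by_contra hxn
    simp only [mem_iUnion, Metric.mem_closedBall, not_exists, not_le,
      Multiset.mem_toFinset, exists_prop] at hxn
    have hball : ∀ z ∈ q.roots.map fun z => ‖(x:ℂ) - z‖₊, R.toNNReal ≤ z := by
      intro w hw
      obtain ⟨z, hz, rfl⟩ := Multiset.mem_map.mp hw
      have h1 : R < |x - z.re| := by
        have h5 := hxn z
        rw [not_and] at h5
        have h6 := lt_of_not_ge (h5 hz)
        rwa [Real.dist_eq] at h6
      have h2 : |x - z.re| ≤ ‖(x:ℂ) - z‖ := by
        have := Complex.abs_re_le_norm ((x:ℂ) - z)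
        simpa using this
      have : R ≤ ‖(x:ℂ) - z‖ := le_trans h1.le h2
      rw [← Real.toNNReal_coe (r := ‖(x:ℂ) - z‖₊)]
      exact Real.toNNReal_mono (by simpa using this)
    have hprod := Multiset.pow_card_le_prod hball
    rw [Multiset.card_map, hcard, ← heval] at hprod
    have hcoe : R ^ k ≤ |p.eval x| := by
      have := NNReal.coe_le_coe.mpr hprod
      rw [NNReal.coe_pow, Real.coe_toNNReal _ hR.le, coe_nnnorm, Real.norm_eq_abs] at this
      exact this
    have : (2:ℝ) * ε ≤ ε := by
      calc (2:ℝ) * ε = R ^ k := hRk.symm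
        _ ≤ |p.eval x| := hcoe
        _ ≤ ε := hx
    linarith
  have hcardle : q.roots.toFinset.card ≤ k := hcard ▸ q.roots.toFinset_card_le
  calc volume {x : ℝ | |p.eval x| ≤ ε}
      ≤ volume (⋃ z ∈ q.roots.toFinset, Metric.closedBall z.re R) := measure_mono hsub
    _ ≤ ∑ z ∈ q.roots.toFinset, volume (Metric.closedBall z.re R) :=
        measure_biUnion_finset_le _ _
    _ = q.roots.toFinset.card • ENNReal.ofReal (2*R) := by
        simp [Real.volume_closedBall, two_mul, Finset.sum_const]
    _ ≤ (k : ℝ≥0∞) * ENNReal.ofReal (2*R) := by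
        rw [nsmul_eq_mul]
        exact mul_le_mul_of_nonneg_right (by exact_mod_cast hcardle) (zero_le)
    _ = ENNReal.ofReal ((k : ℝ) * (2*R)) := by
        rw [← ENNReal.ofReal_natCast k, ← ENNReal.ofReal_mul (by positivity)]
    _ ≤ ENNReal.ofReal ((4 * k) * ε ^ ((1:ℝ)/k)) := by
        apply ENNReal.ofReal_le_ofReal
        have h2 : R ≤ 2 * ε ^ ((1:ℝ)/k) := by
          rw [hRdef, Real.mul_rpow (by norm_num) hε.le]
          have : (2:ℝ) ^ ((1:ℝ)/k) ≤ 2 ^ (1:ℝ) := by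
            apply Real.rpow_le_rpow_of_exponent_le one_le_two
            rw [div_le_one (by exact_mod_cast Nat.pos_of_ne_zero (by omega))]
            exact_mod_cast hk
          rw [Real.rpow_one] at this
          exact mul_le_mul_of_nonneg_right this (Real.rpow_nonneg hε.le _)
        have hε1 : 0 ≤ ε ^ ((1:ℝ)/k) := Real.rpow_nonneg hε.le _
        have hk1 : (1:ℝ) ≤ k := by exact_mod_cast hk
        nlinarith

lemma measure_abs_slice_le (k : ℕ) (hk : 1 ≤ k) (b : Fin k → ℝ) (ε : ℝ) (hε : 0 < ε) :
    volume {x : ℝ | |x ^ k + ∑ j : Fin k, b j * x ^ (k - 1 - (j:ℕ))| ≤ ε} ≤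
      ENNReal.ofReal ((4 * k) * ε ^ ((1:ℝ)/k)) := by
  set r : ℝ[X] := ∑ j : Fin k, C (b j) * X ^ (k - 1 - (j:ℕ)) with hrdef
  have hrdeg : r.degree < (k : ℕ) := by
    apply lt_of_le_of_lt (degree_sum_le _ _)
    apply Finset.sup_lt_iff (by exact_mod_cast WithBot.bot_lt_coe k) |>.mpr
    intro j _
    apply lt_of_le_of_lt (degree_C_mul_X_pow_le _ _)
    exact_mod_cast Nat.lt_of_le_of_lt (Nat.sub_le _ _) (by omega)
  set p : ℝ[X] := X ^ k + r with hpdef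
  have hm : p.Monic := monic_X_pow_add hrdeg
  have hdeg : p.natDegree = k := by
    have : p.degree = (k : ℕ) := by
      rw [hpdef, degree_add_eq_left_of_degree_lt (by rwa [degree_X_pow]), degree_X_pow]
    exact natDegree_eq_of_degree_eq_some this
  have heq : ∀ x : ℝ, p.eval x = x ^ k + ∑ j : Fin k, b j * x ^ (k - 1 - (j:ℕ)) := by
    intro x
    simp [hpdef, hrdef, eval_finset_sum]
  have := measure_abs_poly_le k hk p hm hdeg ε hε
  convert this using 3
  ext x
  rw [heq]


/-- If near `ω₀ = (x₀, y₀) ∈ ℝ × ℝ^d` one has the Malgrange-type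
factorization `F(ω) - θ₀ = G(ω)(ω₁^k + a₁(ω')ω₁^{k-1} + ⋯ + a_k(ω'))` with `G, a_j`
smooth real functions and `G(ω₀) ≠ 0`, then there is a neighborhood `U` of `ω₀` with
`vol{ω ∈ U : |F(ω) - θ₀| ≤ t} = O(t^{1/k})` as `t → 0`. -/
theorem vol_malgrange_factorization_isBigO
    (d k : ℕ) (hk : 1 ≤ k)
    (F G : ℝ × EuclideanSpace ℝ (Fin d) → ℝ)
    (a : Fin k → EuclideanSpace ℝ (Fin d) → ℝ)
    (ω₀ : ℝ × EuclideanSpace ℝ (Fin d)) (θ₀ : ℝ)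
    (hG : ContDiff ℝ (⊤ : ℕ∞) G) (ha : ∀ j, ContDiff ℝ (⊤ : ℕ∞) (a j))
    (hG0 : G ω₀ ≠ 0)
    (hfact : ∃ V ∈ nhds ω₀, ∀ ω ∈ V,
      F ω - θ₀ = G ω * (ω.1 ^ k + ∑ j : Fin k, a j ω.2 * ω.1 ^ (k - 1 - (j : ℕ)))) :
    ∃ U ∈ nhds ω₀, ∃ C : ℝ, 0 < C ∧ ∀ t ∈ Ioc (0 : ℝ) 1,
      volume {ω ∈ U | |F ω - θ₀| ≤ t} ≤ ENNReal.ofReal (C * t ^ ((1 : ℝ) / k)) := by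
  obtain ⟨V, hV, hVfact⟩ := hfact
  set Q : ℝ × EuclideanSpace ℝ (Fin d) → ℝ :=
    fun ω => ω.1 ^ k + ∑ j : Fin k, a j ω.2 * ω.1 ^ (k - 1 - (j : ℕ)) with hQdef
  have hQc : Continuous Q := by
    apply Continuous.add (continuous_fst.pow k)
    exact continuous_finset_sum _ fun j _ =>
      (((ha j).continuous.comp continuous_snd).mul (continuous_fst.pow _))
  set c : ℝ := |G ω₀| / 2 with hc
  have habs : 0 < |G ω₀| := abs_pos.mpr hG0
  have hc0 : 0 < c := by rw [hc]; linarith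
  have hWopen : IsOpen {ω | c < |G ω|} := isOpen_lt continuous_const hG.continuous.abs
  have hWmem : {ω | c < |G ω|} ∈ nhds ω₀ := hWopen.mem_nhds (by simp only [mem_setOf_eq, hc]; linarith)
  have hVW : V ∩ {ω | c < |G ω|} ∈ nhds (ω₀.1, ω₀.2) := by
    rw [Prod.mk.eta]; exact Filter.inter_mem hV hWmem
  obtain ⟨u, hu, v, hv, huv⟩ := mem_nhds_prod_iff.mp hVW
  obtain ⟨r₁, hr₁, hb₁⟩ := Metric.mem_nhds_iff.mp hu
  obtain ⟨r₂, hr₂, hb₂⟩ := Metric.mem_nhds_iff.mp hv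
  set B₂ := Metric.ball ω₀.2 r₂ with hB₂
  set U := Metric.ball ω₀.1 r₁ ×ˢ B₂ with hUdef
  have hUsub : U ⊆ V ∩ {ω | c < |G ω|} := fun ω hω => huv ⟨hb₁ hω.1, hb₂ hω.2⟩
  have hUnhds : U ∈ nhds ω₀ := by
    rw [← @Prod.mk.eta _ _ ω₀]
    exact prod_mem_nhds (Metric.ball_mem_nhds _ hr₁) (Metric.ball_mem_nhds _ hr₂)
  have hvB₂ : volume B₂ ≠ ⊤ := measure_ball_lt_top.ne
  have hvB₂pos : 0 < volume B₂ := Metric.measure_ball_pos _ _ hr₂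
  refine ⟨U, hUnhds, (volume B₂).toReal * (4 * k) * (c⁻¹) ^ ((1:ℝ)/k), ?_, ?_⟩
  · have h1 : 0 < (volume B₂).toReal := ENNReal.toReal_pos hvB₂pos.ne' hvB₂
    have h2 : (0:ℝ) < 4 * k := by positivity
    have h3 : (0:ℝ) < (c⁻¹) ^ ((1:ℝ)/k) := Real.rpow_pos_of_pos (by positivity) _
    positivity
  intro t ht
  obtain ⟨ht0, ht1⟩ := ht
  set ε : ℝ := t / c with hεdef
  have hε0 : 0 < ε := div_pos ht0 hc0
  set T : Set (ℝ × EuclideanSpace ℝ (Fin d)) := U ∩ {ω | |Q ω| ≤ ε} with hTdef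
  have hTmeas : MeasurableSet T :=
    ((Metric.isOpen_ball.prod Metric.isOpen_ball).measurableSet).inter
      (isClosed_le hQc.abs continuous_const).measurableSet
  have hST : {ω ∈ U | |F ω - θ₀| ≤ t} ⊆ T := by
    rintro ω ⟨hωU, hωF⟩
    refine ⟨hωU, ?_⟩
    obtain ⟨hωV, hωG⟩ := hUsub hωU
    have heq : F ω - θ₀ = G ω * Q ω := hVfact ω hωV
    have hGa : c < |G ω| := hωG
    have : c * |Q ω| ≤ t := by
      calc c * |Q ω| ≤ |G ω| * |Q ω| := by
            exact mul_le_mul_of_nonneg_right hGa.le (abs_nonneg _)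
        _ = |F ω - θ₀| := by rw [heq, abs_mul]
        _ ≤ t := hωF
    rw [mem_setOf_eq, hεdef, le_div_iff₀ hc0, mul_comm]
    exact this
  have hbound : ∀ y : EuclideanSpace ℝ (Fin d),
      volume ((fun x => (x, y)) ⁻¹' T) ≤
        B₂.indicator (fun _ => ENNReal.ofReal ((4 * k) * ε ^ ((1:ℝ)/k))) y := by
    intro y
    by_cases hy : y ∈ B₂
    · rw [indicator_of_mem hy]
      have hsub2 : ((fun x => (x, y)) ⁻¹' T) ⊆
          {x : ℝ | |x ^ k + ∑ j : Fin k, a j y * x ^ (k - 1 - (j:ℕ))| ≤ ε} := by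
        rintro x ⟨_, hx2⟩
        exact hx2
      exact le_trans (measure_mono hsub2)
        (measure_abs_slice_le k hk (fun j => a j y) ε hε0)
    · rw [indicator_of_notMem hy]
      have : ((fun x => (x, y)) ⁻¹' T) = ∅ := by
        ext x
        simp only [mem_preimage, mem_empty_iff_false, iff_false]
        rintro ⟨hx1, _⟩
        exact hy hx1.2
      simp [this]
  have hTvol : volume T ≤ ENNReal.ofReal ((4 * k) * ε ^ ((1:ℝ)/k)) * volume B₂ := by
    rw [MeasureTheory.Measure.volume_eq_prod, Measure.prod_apply_symm hTmeas]
    calc ∫⁻ y, volume ((fun x => (x, y)) ⁻¹' T)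
        ≤ ∫⁻ y, B₂.indicator (fun _ => ENNReal.ofReal ((4 * k) * ε ^ ((1:ℝ)/k))) y :=
          lintegral_mono hbound
      _ = ENNReal.ofReal ((4 * k) * ε ^ ((1:ℝ)/k)) * volume B₂ :=
          lintegral_indicator_const Metric.isOpen_ball.measurableSet _
  calc volume {ω ∈ U | |F ω - θ₀| ≤ t} ≤ volume T := measure_mono hST
    _ ≤ ENNReal.ofReal ((4 * k) * ε ^ ((1:ℝ)/k)) * volume B₂ := hTvol
    _ = ENNReal.ofReal ((volume B₂).toReal * (4 * k) * (c⁻¹) ^ ((1:ℝ)/k) * t ^ ((1:ℝ)/k)) := by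
        conv_lhs => rw [← ENNReal.ofReal_toReal hvB₂]
        rw [← ENNReal.ofReal_mul (by positivity)]
        congr 1
        rw [hεdef, div_eq_mul_inv, Real.mul_rpow ht0.le (by positivity)]
        ring
end

section
/- For a monic polynomial q(x) = x^k + a_1 x^{k-1} + ... + a_k with real coefficients, the Lebesgue measure of the set {x ∈ ℝ : |q(x)| ≤ ε} is at most C_k ε^{1/k}, where C_k depends only on k. -/
/-!
Over `ℂ` a monic real polynomial of degree `k` factors as `∏ (x - zᵢ)`, and for real `x` each
factor satisfies `|x - Re zᵢ| ≤ ‖x - zᵢ‖`. So if `|q x| ≤ δ ^ k`, some factor is at most `δ`, and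
`x` lies within `δ` of `Re zᵢ` for a root `zᵢ`: the sublevel set is covered by at most `k`
intervals of length `2δ`. Taking `δ = ε ^ (1/k)` gives the bound with `C_k = 2k`.
-/

open MeasureTheory Set Polynomial

theorem Multiset.exists_mem_le_of_prod_map_le_pow_card {ι R : Type*} [CommSemiring R]
    [LinearOrder R] [IsStrictOrderedRing R] {s : Multiset ι} (hs : s ≠ 0) {f : ι → R} {δ : R}
    (hδ : 0 < δ) (h : (s.map f).prod ≤ δ ^ card s) : ∃ i ∈ s, f i ≤ δ := by
  by_contra! hlt
  have hgt := Multiset.prod_map_lt_prod_map hs (fun _ => δ) f (fun _ _ => hδ) hlt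
  rw [Multiset.map_const', Multiset.prod_replicate] at hgt
  exact h.not_gt hgt

namespace Polynomial

theorem Monic.abs_eval_eq_prod_norm_sub_aroots {p : ℝ[X]} (hp : p.Monic) (x : ℝ) :
    |p.eval x| = ((p.aroots ℂ).map fun z => ‖(x : ℂ) - z‖).prod := by
  have hcast : ((p.eval x : ℝ) : ℂ) = p.aeval (x : ℂ) :=
    (aeval_algebraMap_apply_eq_algebraMap_eval x p).symm
  rw [← Real.norm_eq_abs, ← Complex.norm_real, hcast,
    (IsAlgClosed.splits _).aeval_eq_prod_aroots_of_monic hp, ← normHom_apply, map_multiset_prod,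
    Multiset.map_map]
  rfl

theorem Monic.exists_mem_aroots_abs_sub_re_le {p : ℝ[X]} (hp : p.Monic) (hdeg : p.natDegree ≠ 0)
    {δ : ℝ} (hδ : 0 < δ) {x : ℝ} (hx : |p.eval x| ≤ δ ^ p.natDegree) :
    ∃ z ∈ p.aroots ℂ, |x - z.re| ≤ δ := by
  rw [hp.abs_eval_eq_prod_norm_sub_aroots, ← IsAlgClosed.card_aroots_eq_natDegree (B := ℂ)] at hx
  have hne : p.aroots ℂ ≠ 0 := by
    rw [Ne, ← Multiset.card_eq_zero, IsAlgClosed.card_aroots_eq_natDegree]; exact hdeg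
  obtain ⟨z, hz, hle⟩ := Multiset.exists_mem_le_of_prod_map_le_pow_card hne hδ hx
  refine ⟨z, hz, le_trans ?_ hle⟩
  simpa using Complex.abs_re_le_norm ((x : ℂ) - z)

theorem Monic.setOf_abs_eval_le_subset_biUnion_closedBall {p : ℝ[X]} (hp : p.Monic)
    (hdeg : p.natDegree ≠ 0) {δ : ℝ} (hδ : 0 < δ) :
    {x | |p.eval x| ≤ δ ^ p.natDegree} ⊆
      ⋃ z ∈ (p.aroots ℂ).toFinset, Metric.closedBall z.re δ := by
  intro x hx
  obtain ⟨z, hz, hle⟩ := hp.exists_mem_aroots_abs_sub_re_le hdeg hδ hx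
  exact mem_biUnion (Multiset.mem_toFinset.mpr hz) (by rwa [Metric.mem_closedBall, Real.dist_eq])

theorem Monic.volume_setOf_abs_eval_le_le {p : ℝ[X]} (hp : p.Monic) (hdeg : p.natDegree ≠ 0)
    {δ : ℝ} (hδ : 0 < δ) :
    volume {x | |p.eval x| ≤ δ ^ p.natDegree} ≤ ENNReal.ofReal (2 * p.natDegree * δ) :=
  calc volume {x | |p.eval x| ≤ δ ^ p.natDegree}
      ≤ ∑ z ∈ (p.aroots ℂ).toFinset, volume (Metric.closedBall z.re δ) :=
        (measure_mono (hp.setOf_abs_eval_le_subset_biUnion_closedBall hdeg hδ)).trans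
          (measure_biUnion_finset_le _ _)
    _ = (p.aroots ℂ).toFinset.card * ENNReal.ofReal (2 * δ) := by
        simp only [Real.volume_closedBall, Finset.sum_const, nsmul_eq_mul]
    _ ≤ p.natDegree * ENNReal.ofReal (2 * δ) := by
        gcongr
        exact (Multiset.toFinset_card_le _).trans IsAlgClosed.card_aroots_eq_natDegree.le
    _ = ENNReal.ofReal (2 * p.natDegree * δ) := by
        rw [← ENNReal.ofReal_natCast, ← ENNReal.ofReal_mul (by positivity)]
        ring_nf

theorem exists_monic_natDegree_eq_eval_eq {R : Type*} [CommSemiring R] [Nontrivial R] {k : ℕ}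
    (a : Fin k → R) : ∃ p : R[X], p.Monic ∧ p.natDegree = k ∧
      ∀ x, p.eval x = x ^ k + ∑ j : Fin k, a j * x ^ (k - 1 - (j : ℕ)) := by
  have hdeg := degree_sum_fin_lt (a ∘ Fin.rev)
  refine ⟨_, monic_X_pow_add hdeg, natDegree_add_eq_left_of_degree_lt ?_ |>.trans ?_, fun x => ?_⟩
  · rwa [degree_X_pow]
  · exact natDegree_X_pow k
  · simp only [eval_add, eval_pow, eval_X, eval_finsetSum, eval_mul, eval_C, Function.comp_apply]
    refine congrArg _ (Fintype.sum_equiv Fin.revPerm _ _ fun i => ?_)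
    rw [Fin.revPerm_apply, Fin.val_rev]
    congr 2
    omega

end Polynomial

/-- For a monic real polynomial `q(x) = x^k + a₁ x^{k-1} + ⋯ + a_k` of
degree `k ≥ 1`, the Lebesgue measure of `{x : |q(x)| ≤ ε}` is at most `C_k ε^{1/k}`
where `C_k` depends only on `k`. -/
theorem vol_sublevel_monic_poly
    (k : ℕ) (hk : 1 ≤ k) :
    ∃ C : ℝ, 0 < C ∧ ∀ (a : Fin k → ℝ) (ε : ℝ), 0 < ε →
      volume {x : ℝ | |x ^ k + ∑ j : Fin k, a j * x ^ (k - 1 - (j : ℕ))| ≤ ε} ≤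
        ENNReal.ofReal (C * ε ^ ((1 : ℝ) / k)) := by
  refine ⟨2 * k, by positivity, fun a ε hε => ?_⟩
  obtain ⟨p, hp, hdeg, heval⟩ := exists_monic_natDegree_eq_eval_eq a
  have hroot : (ε ^ ((1 : ℝ) / k)) ^ k = ε := by
    rw [one_div]; exact Real.rpow_inv_natCast_pow hε.le (by omega)
  simpa only [heval, hdeg, hroot] using
    hp.volume_setOf_abs_eval_le_le (by omega) (Real.rpow_pos_of_pos hε ((1 : ℝ) / k))
end

section
/- Let α_j(ω), j ≥ 0, be independent complex Gaussian random variables with α_j ~ N(0, (h^m σ_j)^2), where σ_j ≤ C μ_j^{-ρ}, μ_j ≥ μ_0 > 0, the counting function of (μ_j) satisfies N(μ) ≍ μ^n, and n/2 < s < ρ - n/2. Then there is a constant C' > 0, independent of h ∈ (0,1], such that P( Σ_j μ_j^{2s} |α_j|^2 ≥ h^2 ) ≤ exp( C' - h^{-2(m-1)} / (2 C') ). -/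
/-!
Split the threshold: with `ε = ρ - s + n/2` put `c_j = μ_j^{-ε} / (2 ∑ μ_i^{-ε})`, so that
`∑ c_j h² < h²`. If `∑ μ_j^{2s} |α_j|² ≥ h²`, then `μ_j^{2s} |α_j|² ≥ c_j h²` for some `j`, and a
union bound with the sub-Gaussian tail of each `α_j` gives
`P ≤ ∑_j 4 exp(-θ μ_j^δ t)`, where `δ = ρ - s - n/2 > 0` and `t = h^{-2(m-1)} ≥ 1`.
The counting bound `N(x) ≲ x^n` makes `∑ μ_j^{-ε}` and `∑ exp(-θ μ_j^δ)` converge (dyadic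
shells), and `θ μ_j^δ t ≥ θ μ_j^δ + θ μ₀^δ (t - 1)` extracts the factor `exp(-θ μ₀^δ t)`.
-/

open MeasureTheory ProbabilityTheory Set
open scoped NNReal

noncomputable def complexGaussian (v : ℝ≥0) : Measure ℂ :=
  ((gaussianReal 0 (v / 2)).prod (gaussianReal 0 (v / 2))).map
    (fun p : ℝ × ℝ => ⟨p.1, p.2⟩)

def IsIndepComplexGaussianFamily {Ω : Type*} [MeasurableSpace Ω] (P : Measure Ω)
    {ι : Type*} (d : ι → Ω → ℂ) (σ : ι → ℝ≥0) : Prop :=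
  iIndepFun d P ∧
    ∀ j, Measure.map (d j) P = complexGaussian ((σ j) ^ 2)

open Real
open scoped Nat

lemma hasSubgaussianMGF_id_gaussianReal {v w : ℝ≥0} (hvw : v ≤ w) :
    HasSubgaussianMGF id w (gaussianReal 0 v) where
  integrable_exp_mul := integrable_exp_mul_gaussianReal
  mgf_le t := by
    simp only [mgf_id_gaussianReal, zero_mul, zero_add]
    gcongr

lemma measureReal_gaussianReal_sq_ge_le {v w : ℝ≥0} (hvw : v ≤ w) {a : ℝ} (ha : 0 ≤ a) :
    (gaussianReal 0 v).real {x | a ≤ x ^ 2} ≤ 2 * exp (-a / (2 * w)) := by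
  have hX := hasSubgaussianMGF_id_gaussianReal hvw
  have hsub : {x : ℝ | a ≤ x ^ 2} ⊆ {x | √a ≤ id x} ∪ {x | √a ≤ (-id) x} := by
    intro x hx
    have : √a ≤ |x| := by simpa [sqrt_sq_eq_abs] using sqrt_le_sqrt (h := hx)
    rcases abs_cases x with ⟨hx', -⟩ | ⟨hx', -⟩
    · exact Or.inl (by simpa [hx'] using this)
    · exact Or.inr (by simpa [hx'] using this)
  calc _ ≤ _ := measureReal_mono hsub
    _ ≤ _ := measureReal_union_le _ _
    _ ≤ exp (-√a ^ 2 / (2 * w)) + exp (-√a ^ 2 / (2 * w)) :=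
      add_le_add (hX.measure_ge_le (sqrt_nonneg a)) (hX.neg.measure_ge_le (sqrt_nonneg a))
    _ = _ := by rw [sq_sqrt ha]; ring

lemma measurable_complex_mk : Measurable fun p : ℝ × ℝ => (⟨p.1, p.2⟩ : ℂ) :=
  Complex.measurableEquivRealProd.symm.measurable

instance (v : ℝ≥0) : IsProbabilityMeasure (complexGaussian v) :=
  Measure.isProbabilityMeasure_map measurable_complex_mk.aemeasurable

lemma complexGaussian_map_re (v : ℝ≥0) :
    (complexGaussian v).map Complex.re = gaussianReal 0 (v / 2) := by
  rw [complexGaussian, Measure.map_map Complex.measurable_re measurable_complex_mk]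
  exact Measure.map_fst_prod.trans (by simp)

lemma complexGaussian_map_im (v : ℝ≥0) :
    (complexGaussian v).map Complex.im = gaussianReal 0 (v / 2) := by
  rw [complexGaussian, Measure.map_map Complex.measurable_im measurable_complex_mk]
  exact Measure.map_snd_prod.trans (by simp)

lemma complexGaussian_norm_sq_ge_le {v : ℝ≥0} {w : ℝ} (hvw : v ≤ w) {u : ℝ} (hu : 0 ≤ u) :
    complexGaussian v {z | u ≤ ‖z‖ ^ 2} ≤ ENNReal.ofReal (4 * exp (-u / (2 * w))) := by
  have hv : v / 2 ≤ (w / 2).toNNReal := by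
    rw [Real.le_toNNReal_iff_coe_le (by linarith [v.coe_nonneg])]; push_cast; linarith
  have hw : ((w / 2).toNNReal : ℝ) = w / 2 := Real.coe_toNNReal _ (by linarith [v.coe_nonneg])
  have hcoord : ∀ f : ℂ → ℝ, Measurable f → (complexGaussian v).map f = gaussianReal 0 (v / 2) →
      (complexGaussian v).real (f ⁻¹' {x | u / 2 ≤ x ^ 2}) ≤ 2 * exp (-u / (2 * w)) := by
    intro f hf hmap
    rw [← map_measureReal_apply hf (measurableSet_le measurable_const (by fun_prop)), hmap]
    refine (measureReal_gaussianReal_sq_ge_le hv (by positivity)).trans_eq ?_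
    rw [hw]; ring_nf
  have hsub : {z : ℂ | u ≤ ‖z‖ ^ 2} ⊆
      Complex.re ⁻¹' {x | u / 2 ≤ x ^ 2} ∪ Complex.im ⁻¹' {x | u / 2 ≤ x ^ 2} := by
    intro z hz
    simp only [mem_ofPred_eq, Complex.sq_norm, Complex.normSq_apply] at hz
    by_contra! h
    simp only [mem_union, mem_preimage, mem_ofPred_eq, not_or, not_le] at h
    nlinarith [h.1, h.2]
  rw [← ofReal_measureReal]
  refine ENNReal.ofReal_le_ofReal
    ((measureReal_mono hsub).trans ((measureReal_union_le _ _).trans ?_))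
  linarith [hcoord _ Complex.measurable_re (complexGaussian_map_re v),
    hcoord _ Complex.measurable_im (complexGaussian_map_im v)]

lemma measure_tsum_ge_le_tsum_measure_ge {Ω ι : Type*} [MeasurableSpace Ω] [Countable ι]
    (P : Measure Ω) (X : ι → Ω → ℝ) {c : ι → ℝ} (hc : Summable c) {a : ℝ} (ha : 0 < a)
    (hca : ∑' j, c j < a) :
    P {ω | a ≤ ∑' j, X j ω} ≤ ∑' j, P {ω | c j ≤ X j ω} := by
  refine (measure_mono fun ω hω => ?_).trans (measure_iUnion_le _)
  simp only [mem_iUnion, mem_ofPred_eq] at hω ⊢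
  by_contra! hlt
  by_cases hX : Summable fun j => X j ω
  · linarith [hX.tsum_le_tsum (fun j => (hlt j).le) hc]
  · rw [tsum_eq_zero_of_not_summable hX] at hω
    linarith

lemma measure_tsum_mul_norm_sq_ge_le {Ω ι : Type*} [MeasurableSpace Ω] [Countable ι]
    (P : Measure Ω) {α : ι → Ω → ℂ} {v : ι → ℝ≥0}
    (hα : ∀ j, P.map (α j) = complexGaussian (v j)) {w V c : ι → ℝ} (hw : ∀ j, 0 < w j)
    (hV : ∀ j, v j ≤ V j) (hc0 : ∀ j, 0 ≤ c j) (hc : Summable c) (hc1 : ∑' j, c j < 1)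
    {a : ℝ} (ha : 0 < a) :
    P {ω | a ≤ ∑' j, w j * ‖α j ω‖ ^ 2} ≤
      ∑' j, ENNReal.ofReal (4 * exp (-(c j * a / w j) / (2 * V j))) := by
  refine (measure_tsum_ge_le_tsum_measure_ge P _ (hc.mul_right a) ha
    (by rw [tsum_mul_right]; exact mul_lt_of_lt_one_left ha hc1)).trans
    (ENNReal.tsum_le_tsum fun j => ?_)
  have hαj : AEMeasurable (α j) P :=
    .of_map_ne_zero (by rw [hα j]; exact IsProbabilityMeasure.ne_zero _)
  have hset : {ω | c j * a ≤ w j * ‖α j ω‖ ^ 2} = α j ⁻¹' {z | c j * a / w j ≤ ‖z‖ ^ 2} := by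
    ext ω
    simp only [mem_ofPred_eq, mem_preimage, div_le_iff₀' (hw j)]
  rw [hset, ← Measure.map_apply_of_aemeasurable hαj
    (measurableSet_le measurable_const (by fun_prop)), hα j]
  exact complexGaussian_norm_sq_ge_le (hV j) (div_nonneg (mul_nonneg (hc0 j) ha.le) (hw j).le)

lemma summable_rpow_neg_of_ncard_le {ι : Type*} {μ : ι → ℝ} {μ₀ c : ℝ} {n : ℕ} (hμ₀ : 0 < μ₀)
    (hμ : ∀ j, μ₀ ≤ μ j)
    (hN : ∀ x, μ₀ ≤ x → {j | μ j ≤ x}.Finite ∧ ({j | μ j ≤ x}.ncard : ℝ) ≤ c * x ^ n)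
    {ε : ℝ} (hε : n < ε) :
    Summable fun j => μ j ^ (-ε) := by
  set x : ℕ → ℝ := fun k => μ₀ * 2 ^ k
  have hx : ∀ k, μ₀ ≤ x k := fun k => le_mul_of_one_le_right hμ₀.le (one_le_pow₀ one_le_two)
  set r : ℝ := 2 ^ ((n : ℝ) - ε) with hr_def
  have hr : r < 1 := rpow_lt_one_of_one_lt_of_neg one_lt_two (by linarith)
  have hc : 0 ≤ c := by
    have := (hN μ₀ le_rfl).2
    exact nonneg_of_mul_nonneg_left ((Nat.cast_nonneg _).trans this) (by positivity)
  -- each `μ j` is charged to the dyadic scale `x k ≤ μ j < 2 * x k`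
  have hscale : ∀ j, ENNReal.ofReal (μ j ^ (-ε)) ≤
      ∑' k, {i | μ i ≤ 2 * x k}.indicator (fun _ => ENNReal.ofReal (x k ^ (-ε))) j := by
    intro j
    obtain ⟨k, hk, hk'⟩ := exists_nat_pow_near ((one_le_div hμ₀).2 (hμ j)) one_lt_two
    rw [le_div_iff₀ hμ₀, mul_comm] at hk
    rw [div_lt_iff₀ hμ₀, pow_succ] at hk'
    refine le_trans ?_ (ENNReal.le_tsum k)
    rw [indicator_of_mem (by simp only [mem_ofPred_eq, x]; linarith)]
    exact ENNReal.ofReal_le_ofReal (rpow_le_rpow_of_nonpos (hμ₀.trans_le (hx k)) hk (by linarith))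
  have hshell : ∀ k, ∑' j, {i | μ i ≤ 2 * x k}.indicator (fun _ => ENNReal.ofReal (x k ^ (-ε))) j ≤
      ENNReal.ofReal (c * 2 ^ n * μ₀ ^ ((n : ℝ) - ε) * r ^ k) := by
    intro k
    obtain ⟨hfin, hle⟩ := hN (2 * x k) (by linarith [hx k, hμ₀.trans_le (hx k)])
    have hxk : 0 < x k := hμ₀.trans_le (hx k)
    have hpow : (2 * x k) ^ n * x k ^ (-ε) = 2 ^ n * μ₀ ^ ((n : ℝ) - ε) * r ^ k := by
      rw [mul_pow, mul_assoc, ← rpow_natCast (x k), ← rpow_add hxk, ← sub_eq_add_neg,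
        mul_rpow hμ₀.le (by positivity), ← rpow_pow_comm zero_le_two, ← hr_def]
      ring
    rw [← tsum_subtype, ENNReal.tsum_set_const, ← hfin.cast_ncard_eq, ENat.toENNReal_coe,
      ← ENNReal.ofReal_natCast, ← ENNReal.ofReal_mul (by positivity)]
    refine ENNReal.ofReal_le_ofReal ((mul_le_mul_of_nonneg_right hle (by positivity)).trans_eq ?_)
    rw [mul_assoc, hpow]
    ring
  have hfinite : ∑' j, ENNReal.ofReal (μ j ^ (-ε)) ≠ ⊤ := by
    refine ne_top_of_le_ne_top ?_ (ENNReal.tsum_le_tsum hscale)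
    rw [ENNReal.tsum_comm]
    refine ne_top_of_le_ne_top ?_ (ENNReal.tsum_le_tsum hshell)
    rw [← ENNReal.ofReal_tsum_of_nonneg (fun k => by positivity)
      ((summable_geometric_of_lt_one (by positivity) hr).mul_left _)]
    exact ENNReal.ofReal_ne_top
  simpa [ENNReal.toReal_ofReal (rpow_nonneg (hμ₀.le.trans (hμ _)) _)] using
    ENNReal.summable_toReal hfinite

lemma summable_exp_neg_mul_rpow_of_ncard_le {ι : Type*} {μ : ι → ℝ} {μ₀ c : ℝ} {n : ℕ}
    (hμ₀ : 0 < μ₀) (hμ : ∀ j, μ₀ ≤ μ j)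
    (hN : ∀ x, μ₀ ≤ x → {j | μ j ≤ x}.Finite ∧ ({j | μ j ≤ x}.ncard : ℝ) ≤ c * x ^ n)
    {θ δ : ℝ} (hθ : 0 < θ) (hδ : 0 < δ) :
    Summable fun j => exp (-(θ * μ j ^ δ)) := by
  obtain ⟨k, hk⟩ := exists_nat_gt (n / δ)
  have hsum := summable_rpow_neg_of_ncard_le hμ₀ hμ hN (ε := δ * k)
    (by rwa [div_lt_iff₀ hδ, mul_comm] at hk)
  refine .of_nonneg_of_le (fun j => (exp_pos _).le) (fun j => ?_) (hsum.mul_left (k ! / θ ^ k))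
  have hμj : 0 < μ j := hμ₀.trans_le (hμ j)
  have hy : 0 < θ * μ j ^ δ := by positivity
  calc exp (-(θ * μ j ^ δ)) = (exp (θ * μ j ^ δ))⁻¹ := exp_neg _
    _ ≤ ((θ * μ j ^ δ) ^ k / k !)⁻¹ :=
      inv_anti₀ (by positivity) (pow_div_factorial_le_exp _ hy.le k)
    _ = k ! / θ ^ k * μ j ^ (-(δ * k)) := by
      rw [inv_div, mul_pow, ← rpow_natCast (μ j ^ δ), ← rpow_mul hμj.le, rpow_neg hμj.le]
      ring

lemma tsum_ofReal_mul_exp_neg_mul_le {ι : Type*} {f : ι → ℝ} (hf : Summable fun j => exp (-f j))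
    {K b t : ℝ} (hK : 0 ≤ K) (hb : ∀ j, b ≤ f j) (ht : 1 ≤ t) :
    ∑' j, ENNReal.ofReal (K * exp (-(f j * t))) ≤
      ENNReal.ofReal (K * exp b * (∑' j, exp (-f j)) * exp (-(b * t))) := by
  have hterm : ∀ j, K * exp (-(f j * t)) ≤ K * exp b * exp (-(b * t)) * exp (-f j) := by
    intro j
    rw [mul_assoc K, mul_assoc K, ← exp_add, ← exp_add]
    gcongr
    nlinarith [hb j]
  calc ∑' j, ENNReal.ofReal (K * exp (-(f j * t)))
      ≤ ∑' j, ENNReal.ofReal (K * exp b * exp (-(b * t)) * exp (-f j)) :=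
        ENNReal.tsum_le_tsum fun j => ENNReal.ofReal_le_ofReal (hterm j)
    _ = ENNReal.ofReal (∑' j, K * exp b * exp (-(b * t)) * exp (-f j)) :=
        (ENNReal.ofReal_tsum_of_nonneg (fun j => by positivity) (hf.mul_left _)).symm
    _ = _ := by rw [tsum_mul_left]; ring_nf

lemma exists_mul_exp_neg_mul_le_exp_sub_div (D : ℝ) {β : ℝ} (hβ : 0 < β) :
    ∃ C' : ℝ, 0 < C' ∧ ∀ t, 0 ≤ t → D * exp (-(β * t)) ≤ exp (C' - t / (2 * C')) := by
  set C' := max (log D) (1 / (2 * β)) + 1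
  have hβC' : 1 / (2 * β) < C' := by linarith [le_max_right (log D) (1 / (2 * β))]
  have hC' : 0 < C' := lt_trans (by positivity) hβC'
  refine ⟨C', hC', fun t ht => ?_⟩
  have hdiv : t / (2 * C') ≤ β * t := by
    rw [div_le_iff₀ (by positivity)]
    rw [div_lt_iff₀ (by positivity)] at hβC'
    nlinarith
  calc D * exp (-(β * t)) ≤ exp (log D) * exp (-(β * t)) := by gcongr; exact le_exp_log D
    _ = exp (log D - β * t) := by rw [← exp_add]; ring_nf
    _ ≤ exp (C' - t / (2 * C')) := by
      gcongr
      linarith [le_max_left (log D) (1 / (2 * β))]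

lemma measure_tsum_rpow_mul_norm_sq_ge_le {Ω ι : Type*} [MeasurableSpace Ω] [Countable ι]
    [Nonempty ι] {μ : ι → ℝ} (hμ : ∀ j, 0 < μ j) {σ : ι → ℝ≥0} {C ρ : ℝ} (hC : 0 < C)
    (hσ : ∀ j, (σ j : ℝ) ≤ C * μ j ^ (-ρ)) {ε : ℝ} (hsum : Summable fun j => μ j ^ (-ε))
    (s : ℝ) (m : ℕ) {h : ℝ} (hh : 0 < h) (P : Measure Ω) {α : ι → Ω → ℂ}
    (hα : ∀ j, P.map (α j) = complexGaussian (((h ^ m).toNNReal * σ j) ^ 2)) :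
    P {ω | h ^ 2 ≤ ∑' j, μ j ^ (2 * s) * ‖α j ω‖ ^ 2} ≤
      ∑' j, ENNReal.ofReal (4 * exp (-(1 / (4 * (∑' i, μ i ^ (-ε)) * C ^ 2) *
        μ j ^ (2 * ρ - 2 * s - ε) * h ^ (-(2 : ℝ) * (m - 1))))) := by
  set Z := ∑' i, μ i ^ (-ε)
  have hZ : 0 < Z :=
    hsum.tsum_pos (fun i => (rpow_pos_of_pos (hμ i) _).le) (Classical.arbitrary ι)
      (rpow_pos_of_pos (hμ _) _)
  have hV (j : ι) :
      ((((h ^ m).toNNReal * σ j) ^ 2 : ℝ≥0) : ℝ) ≤ (h ^ m * (C * μ j ^ (-ρ))) ^ 2 := by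
    push_cast [Real.coe_toNNReal _ (by positivity : (0 : ℝ) ≤ h ^ m)]
    gcongr
    exact hσ j
  have hexponent (j : ι) : -(μ j ^ (-ε) / (2 * Z) * h ^ 2 / μ j ^ (2 * s)) /
      (2 * (h ^ m * (C * μ j ^ (-ρ))) ^ 2) =
      -(1 / (4 * Z * C ^ 2) * μ j ^ (2 * ρ - 2 * s - ε) * h ^ (-(2 : ℝ) * (m - 1))) := by
    have hμ_split : μ j ^ (-ε) = μ j ^ (2 * ρ - 2 * s - ε) * μ j ^ (2 * s) * (μ j ^ (-ρ)) ^ 2 := by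
      rw [← rpow_natCast, ← rpow_mul (hμ j).le, ← rpow_add (hμ j), ← rpow_add (hμ j)]
      ring_nf
    have hh_split : h ^ 2 = h ^ (-(2 : ℝ) * (m - 1)) * (h ^ m) ^ 2 := by
      rw [← pow_mul, ← rpow_natCast h (m * 2), ← rpow_add hh, ← rpow_natCast]
      push_cast
      ring_nf
    rw [hμ_split, hh_split]
    have := rpow_pos_of_pos (hμ j) (-ρ)
    have := rpow_pos_of_pos (hμ j) (2 * s)
    field_simp
    ring
  have := measure_tsum_mul_norm_sq_ge_le P hα (w := fun j => μ j ^ (2 * s))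
    (c := fun j => μ j ^ (-ε) / (2 * Z)) (fun j => rpow_pos_of_pos (hμ j) _) hV
    (fun j => div_nonneg (rpow_pos_of_pos (hμ j) _).le (by positivity)) (hsum.div_const _)
    (by rw [tsum_div_const, div_lt_one (by positivity)]; linarith) (by positivity : 0 < h ^ 2)
  simpa only [hexponent] using this

theorem hs_norm_perturbation_probability_general
    (n m : ℕ) (hm : 2 ≤ m) (s ρ μ₀ C : ℝ) (hμ₀ : 0 < μ₀)
    (hsρ : s < ρ - n / 2)
    (μ : ℕ → ℝ) (hμ : ∀ j, μ₀ ≤ μ j)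
    (σ : ℕ → ℝ≥0) (hσ : ∀ j, (σ j : ℝ) ≤ C * μ j ^ (-ρ))
    (hcount : ∃ c₁ c₂ : ℝ, 0 < c₁ ∧ ∀ x : ℝ, μ₀ ≤ x →
      ({j : ℕ | μ j ≤ x}).Finite ∧
      c₁ * x ^ n ≤ (({j : ℕ | μ j ≤ x}).ncard : ℝ) ∧
      (({j : ℕ | μ j ≤ x}).ncard : ℝ) ≤ c₂ * x ^ n) :
    ∃ C' : ℝ, 0 < C' ∧
      ∀ h ∈ Ioc (0 : ℝ) 1,
      ∀ (Ω : Type) (_ : MeasurableSpace Ω) (P : Measure Ω), IsProbabilityMeasure P →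
      ∀ α : ℕ → Ω → ℂ,
        IsIndepComplexGaussianFamily P α (fun j => Real.toNNReal (h ^ m) * σ j) →
        (P {ω | h ^ 2 ≤ ∑' j, μ j ^ (2 * s) * ‖α j ω‖ ^ 2}).toReal ≤
          Real.exp (C' - h ^ (-(2 : ℝ) * (m - 1)) / (2 * C')) := by
  obtain ⟨c₁, c₂, -, hN⟩ := hcount
  have hN' (x : ℝ) (hx : μ₀ ≤ x) := And.intro (hN x hx).1 (hN x hx).2.2
  have hμpos (j : ℕ) : 0 < μ j := hμ₀.trans_le (hμ j)
  have hσ' (j : ℕ) : (σ j : ℝ) ≤ (C + 1) * μ j ^ (-ρ) := by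
    linarith [hσ j, rpow_pos_of_pos (hμpos j) (-ρ)]
  have hC : 0 < C + 1 := by
    nlinarith [(σ 0).coe_nonneg.trans (hσ 0), rpow_pos_of_pos (hμpos 0) (-ρ)]
  set ε := ρ - s + n / 2 with hε
  have hsum := summable_rpow_neg_of_ncard_le hμ₀ hμ hN' (ε := ε) (by rw [hε]; linarith)
  have hZ := hsum.tsum_pos (fun j => (rpow_pos_of_pos (hμpos j) _).le) 0
    (rpow_pos_of_pos (hμpos 0) _)
  set θ := 1 / (4 * (∑' i, μ i ^ (-ε)) * (C + 1) ^ 2)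
  set δ := 2 * ρ - 2 * s - ε with hδ
  have hexp := summable_exp_neg_mul_rpow_of_ncard_le hμ₀ hμ hN' (θ := θ) (δ := δ) (by positivity)
    (by rw [hδ, hε]; linarith)
  obtain ⟨C', hC', hbound⟩ := exists_mul_exp_neg_mul_le_exp_sub_div
    (4 * exp (θ * μ₀ ^ δ) * ∑' j, exp (-(θ * μ j ^ δ))) (β := θ * μ₀ ^ δ) (by positivity)
  refine ⟨C', hC', fun h ⟨hh0, hh1⟩ Ω _ P _ α hα => ?_⟩
  have ht : 1 ≤ h ^ (-(2 : ℝ) * (m - 1)) := one_le_rpow_of_pos_of_le_one_of_nonpos hh0 hh1 (by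
    have : (2 : ℝ) ≤ m := by exact_mod_cast hm
    linarith)
  have hθδ (j : ℕ) : θ * μ₀ ^ δ ≤ θ * μ j ^ δ := by
    gcongr
    · rw [hδ, hε]; linarith
    · exact hμ j
  refine ENNReal.toReal_le_of_le_ofReal (exp_nonneg _)
    ((measure_tsum_rpow_mul_norm_sq_ge_le hμpos hC hσ' hsum s m hh0 P hα.2).trans ?_)
  exact (tsum_ofReal_mul_exp_neg_mul_le hexp (by norm_num) hθδ ht).trans
    (ENNReal.ofReal_le_ofReal (hbound _ (by linarith)))

/-- Let `α_j ∼ N(0, (h^m σ_j)²)` be independent complex Gaussians with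
`σ_j ≤ C μ_j^{-ρ}`, `μ_j ≥ μ₀ > 0`, counting function `N(x) ≍ x^n`, and
`n/2 < s < ρ - n/2`.  Then there is `C' > 0` independent of `h ∈ (0,1]` such that
`P(∑_j μ_j^{2s}|α_j|² ≥ h²) ≤ exp(C' - h^{-2(m-1)}/(2C'))`. -/
theorem hs_norm_perturbation_probability
    (n m : ℕ) (hn : 0 < n) (hm : 2 ≤ m) (s ρ μ₀ C : ℝ) (hμ₀ : 0 < μ₀)
    (hs : (n : ℝ) / 2 < s) (hsρ : s < ρ - n / 2)
    (μ : ℕ → ℝ) (hμ : ∀ j, μ₀ ≤ μ j)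
    (σ : ℕ → ℝ≥0) (hσ : ∀ j, (σ j : ℝ) ≤ C * μ j ^ (-ρ))
    (hcount : ∃ c₁ c₂ : ℝ, 0 < c₁ ∧ ∀ x : ℝ, μ₀ ≤ x →
      ({j : ℕ | μ j ≤ x}).Finite ∧
      c₁ * x ^ n ≤ (({j : ℕ | μ j ≤ x}).ncard : ℝ) ∧
      (({j : ℕ | μ j ≤ x}).ncard : ℝ) ≤ c₂ * x ^ n) :
    ∃ C' : ℝ, 0 < C' ∧
      ∀ h ∈ Ioc (0 : ℝ) 1,
      ∀ (Ω : Type) (_ : MeasurableSpace Ω) (P : Measure Ω), IsProbabilityMeasure P →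
      ∀ α : ℕ → Ω → ℂ,
        IsIndepComplexGaussianFamily P α (fun j => Real.toNNReal (h ^ m) * σ j) →
        (P {ω | h ^ 2 ≤ ∑' j, μ j ^ (2 * s) * ‖α j ω‖ ^ 2}).toReal ≤
          Real.exp (C' - h ^ (-(2 : ℝ) * (m - 1)) / (2 * C')) :=
  hs_norm_perturbation_probability_general n m hm s ρ μ₀ C hμ₀ hsρ μ hμ σ hσ hcount
end
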